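/- Let a : ℝ → ℝ be a C^∞ function with a(s) = 0 for all s ≤ 0, a(s) > 0 for all s > 0, and |a| bounded. For a C¹ vector field V on ℝ³, let V̂ denote its cotangent lift to ℝ⁶ = ℝ³ × ℝ³, V̂(q,p) = (V(q), −(DV(q))ᵀ p). Then the lifted perturbed action is not smoothly linearizable at the origin of ℝ⁶: there is no pair (U, φ) with U an open neighbourhood of 0 in ℝ⁶ and φ : U → ℝ⁶ a C^∞ map with φ(0) = 0 and Dφ(w) a linear isomorphism for every w ∈ U, such that for all w ∈ U: Dφ(w)(X̃̂(w)) = X̂(φ(w)), Dφ(w)(Ỹ̂(w)) = Ŷ(φ(w)), and Dφ(w)(Z̃̂(w)) = Ẑ(φ(w)), where X̃̂, Ỹ̂, Z̃̂ are the cotangent lifts of the perturbed fields X̃, Ỹ, Z̃ and X̂, Ŷ, Ẑ are the cotangent lifts of the linear fields X, Y, Z. -/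

import Mathlib

noncomputable section

/-- The linear vector field `X(x,y,z) = (0,z,y)` on `ℝ³`. -/
def Xf (p : Fin 3 → ℝ) : Fin 3 → ℝ := ![0, p 2, p 1]

/-- The linear vector field `Y(x,y,z) = (z,0,x)` on `ℝ³`. -/
def Yf (p : Fin 3 → ℝ) : Fin 3 → ℝ := ![p 2, 0, p 0]

/-- The linear vector field `Z(x,y,z) = (−y,x,0)` on `ℝ³`. -/
def Zf (p : Fin 3 → ℝ) : Fin 3 → ℝ := ![-p 1, p 0, 0]

/-- The Lie bracket of vector fields: `[V,W](p) = DW(p)(V(p)) − DV(p)(W(p))`. -/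
def lieBr (V W : (Fin 3 → ℝ) → (Fin 3 → ℝ)) (p : Fin 3 → ℝ) : Fin 3 → ℝ :=
  fderiv ℝ W p (V p) - fderiv ℝ V p (W p)

/-- The radial vector field `R(x,y,z) = (x,y,z)`. -/
def Rf (p : Fin 3 → ℝ) : Fin 3 → ℝ := p

/-- The quadratic form `x² + y² − z²`. -/
def Qf (p : Fin 3 → ℝ) : ℝ := (p 0) ^ 2 + (p 1) ^ 2 - (p 2) ^ 2

/-- `A(x,y,z) = a(x²+y²−z²)/(x²+y²)` when `x²+y² ≠ 0`, and `0` when `x²+y² = 0`. -/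
def Afun (a : ℝ → ℝ) (p : Fin 3 → ℝ) : ℝ :=
  if (p 0) ^ 2 + (p 1) ^ 2 = 0 then 0 else a (Qf p) / ((p 0) ^ 2 + (p 1) ^ 2)

/-- `f = x·A`. -/
def ff (a : ℝ → ℝ) (p : Fin 3 → ℝ) : ℝ := p 0 * Afun a p

/-- `g = −y·A`. -/
def gf (a : ℝ → ℝ) (p : Fin 3 → ℝ) : ℝ := -p 1 * Afun a p

/-- The Cairns–Ghys perturbed field `X̃ = X + f·R`. -/
def Xt (a : ℝ → ℝ) (p : Fin 3 → ℝ) : Fin 3 → ℝ := Xf p + ff a p • Rf p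

/-- The Cairns–Ghys perturbed field `Ỹ = Y + g·R`. -/
def Yt (a : ℝ → ℝ) (p : Fin 3 → ℝ) : Fin 3 → ℝ := Yf p + gf a p • Rf p

/-- The Cairns–Ghys perturbed field `Z̃ = Z`. -/
def Zt (p : Fin 3 → ℝ) : Fin 3 → ℝ := Zf p

/-- `ℝ⁶ = T*ℝ³` with base coordinates `q` and fiber coordinates `p`. -/
abbrev E6 : Type := (Fin 3 → ℝ) × (Fin 3 → ℝ)

/-- The cotangent lift of a vector field `V` on `ℝ³`: `V̂(q,p) = (V(q), −(DV(q))ᵀ p)`. -/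
def cotLift (V : (Fin 3 → ℝ) → (Fin 3 → ℝ)) (w : E6) : E6 :=
  (V w.1, fun i => -∑ j, fderiv ℝ V w.1 (Pi.single i 1) j * w.2 j)


/-!
On the positive `x`-axis of the base, with zero momentum, the lifted perturbed field `X̃̂` is
`a(x²) ∂ₓ`, which does not vanish there, so that half-axis is a curve tangent to `X̃̂`. A
conjugacy `φ` carries `X̃̂` to `X̂`, so it pulls the `X̂`-invariant functions `Qf q`, `Qf p`,
`q ⬝ᵥ p` back to functions constant along the half-axis; since they vanish at the origin, `φ`
maps a point of the half-axis into their common zero set. There `q` and the vector dual to `p`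
are null and orthogonal for the Lorentzian form `Qf`, hence parallel, and this forces
`X̂, Ŷ, Ẑ` to be linearly dependent. At the point of the half-axis, however, the perturbed lifts
have base parts `(a(x²),0,0)`, `(0,0,x)`, `(0,x,0)` and are independent, contradicting the
injectivity of `Dφ`.
-/

open Matrix Set Filter Topology

section FirstIntegral

variable {E F : Type*} [NormedAddCommGroup E] [NormedSpace ℝ E]
  [NormedAddCommGroup F] [NormedSpace ℝ F]

def IsFirstIntegral (I : F → ℝ) (V : F → F) : Prop :=
  ∀ y, ∃ D : F →L[ℝ] ℝ, HasFDerivAt I D y ∧ D (V y) = 0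

lemma IsFirstIntegral.continuous {I : F → ℝ} {V : F → F} (hI : IsFirstIntegral I V) :
    Continuous I :=
  continuous_iff_continuousAt.2 fun y => (hI y).choose_spec.1.continuousAt

lemma IsFirstIntegral.comp_eq_of_tangent {I : F → ℝ} {V : F → F} (hI : IsFirstIntegral I V)
    {U : Set E} {φ : E → F} {W : E → E} (hU : IsOpen U) (hφ : DifferentiableOn ℝ φ U)
    (hconj : ∀ x ∈ U, fderiv ℝ φ x (W x) = V (φ x))
    {γ : ℝ → E} {a b : ℝ} (hab : a < b) (hγU : MapsTo γ (Icc a b) U)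
    (hγ : ContinuousOn γ (Icc a b))
    (hγ' : ∀ t ∈ Ioo a b, ∃ c : ℝ, HasDerivAt γ (c • W (γ t)) t) :
    I (φ (γ b)) = I (φ (γ a)) := by
  have hcont : ContinuousOn (fun t => I (φ (γ t))) (Icc a b) :=
    hI.continuous.comp_continuousOn (hφ.continuousOn.comp hγ hγU)
  have hderiv : ∀ t ∈ Ioo a b, HasDerivAt (fun t => I (φ (γ t))) 0 t := by
    intro t ht
    obtain ⟨c, hc⟩ := hγ' t ht
    obtain ⟨D, hD, hDV⟩ := hI (φ (γ t))
    have hγtU : γ t ∈ U := hγU (Ioo_subset_Icc_self ht)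
    have hφt := (hφ.differentiableAt (hU.mem_nhds hγtU)).hasFDerivAt
    have h := (hD.comp (γ t) hφt).comp_hasDerivAt t hc
    rw [ContinuousLinearMap.comp_apply, map_smul, hconj _ hγtU, map_smul, hDV, smul_zero] at h
    exact h
  obtain ⟨t, -, ht⟩ := exists_hasDerivAt_eq_slope _ _ hab hcont hderiv
  rw [eq_comm, div_eq_zero_iff, sub_eq_zero] at ht
  exact ht.resolve_right (sub_ne_zero.2 hab.ne')

end FirstIntegral

lemma exists_pos_mapsTo_Icc_smul {E : Type*} [AddCommGroup E] [Module ℝ E] [TopologicalSpace E]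
    [ContinuousSMul ℝ E] {U : Set E} (hU : U ∈ 𝓝 0) (e : E) :
    ∃ T : ℝ, 0 < T ∧ MapsTo (· • e) (Icc 0 T) U := by
  have h : (· • e) ⁻¹' U ∈ 𝓝[≥] (0 : ℝ) := mem_nhdsWithin_of_mem_nhds <|
    (continuous_id.smul continuous_const).continuousAt.preimage_mem_nhds (by simpa using hU)
  exact mem_nhdsGE_iff_exists_Icc_subset.1 h

lemma cotLift_mulVec (M : Matrix (Fin 3) (Fin 3) ℝ) (w : E6) :
    cotLift (M *ᵥ ·) w = (M *ᵥ w.1, -(Mᵀ *ᵥ w.2)) := by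
  have hD : fderiv ℝ (M *ᵥ ·) w.1 = (Matrix.toLin' M).toContinuousLinearMap := by
    rw [← (Matrix.toLin' M).toContinuousLinearMap.fderiv]
    rfl
  ext i
  · rfl
  · simp [cotLift, hD, mulVec, dotProduct, Pi.single_apply]

lemma cotLift_mk_zero (V : (Fin 3 → ℝ) → Fin 3 → ℝ) (q : Fin 3 → ℝ) :
    cotLift V (q, 0) = (V q, 0) := by
  ext i <;> simp [cotLift]

lemma Xf_eq_mulVec : Xf = (!![0, 0, 0; 0, 0, 1; 0, 1, 0] *ᵥ ·) := by
  ext q i; fin_cases i <;> simp [Xf, mulVec, dotProduct, Fin.sum_univ_three]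

lemma Yf_eq_mulVec : Yf = (!![0, 0, 1; 0, 0, 0; 1, 0, 0] *ᵥ ·) := by
  ext q i; fin_cases i <;> simp [Yf, mulVec, dotProduct, Fin.sum_univ_three]

lemma Zf_eq_mulVec : Zf = (!![0, -1, 0; 1, 0, 0; 0, 0, 0] *ᵥ ·) := by
  ext q i; fin_cases i <;> simp [Zf, mulVec, dotProduct, Fin.sum_univ_three]

lemma cotLift_Xf (w : E6) : cotLift Xf w = (![0, w.1 2, w.1 1], ![0, -w.2 2, -w.2 1]) := by
  rw [Xf_eq_mulVec, cotLift_mulVec]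
  ext i <;> fin_cases i <;> simp [mulVec, dotProduct, Fin.sum_univ_three]

lemma cotLift_Yf (w : E6) : cotLift Yf w = (![w.1 2, 0, w.1 0], ![-w.2 2, 0, -w.2 0]) := by
  rw [Yf_eq_mulVec, cotLift_mulVec]
  ext i <;> fin_cases i <;> simp [mulVec, dotProduct, Fin.sum_univ_three]

lemma cotLift_Zf (w : E6) : cotLift Zf w = (![-w.1 1, w.1 0, 0], ![-w.2 1, w.2 0, 0]) := by
  rw [Zf_eq_mulVec, cotLift_mulVec]
  ext i <;> fin_cases i <;> simp [mulVec, dotProduct, Fin.sum_univ_three]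

open ContinuousLinearMap in
lemma hasFDerivAt_fst_apply (i : Fin 3) (w : E6) :
    HasFDerivAt (fun w : E6 => w.1 i) (proj i ∘L fst ℝ (Fin 3 → ℝ) (Fin 3 → ℝ)) w :=
  (proj i ∘L fst ℝ (Fin 3 → ℝ) (Fin 3 → ℝ)).hasFDerivAt

open ContinuousLinearMap in
lemma hasFDerivAt_snd_apply (i : Fin 3) (w : E6) :
    HasFDerivAt (fun w : E6 => w.2 i) (proj i ∘L snd ℝ (Fin 3 → ℝ) (Fin 3 → ℝ)) w :=
  (proj i ∘L snd ℝ (Fin 3 → ℝ) (Fin 3 → ℝ)).hasFDerivAt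

lemma isFirstIntegral_dotProduct_cotLift_mulVec (M : Matrix (Fin 3) (Fin 3) ℝ) :
    IsFirstIntegral (fun w : E6 => w.1 ⬝ᵥ w.2) (cotLift (M *ᵥ ·)) := by
  intro w
  refine ⟨_, HasFDerivAt.fun_sum (u := Finset.univ) fun i _ =>
    (hasFDerivAt_fst_apply i w).mul (hasFDerivAt_snd_apply i w), ?_⟩
  have h := dotProduct_mulVec w.1 Mᵀ w.2
  rw [vecMul_transpose] at h
  simp only [cotLift_mulVec, dotProduct, _root_.sum_apply, _root_.add_apply, _root_.smul_apply,
    ContinuousLinearMap.comp_apply, ContinuousLinearMap.coe_fst', ContinuousLinearMap.coe_snd',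
    ContinuousLinearMap.proj_apply, Pi.neg_apply, smul_eq_mul, mul_neg] at h ⊢
  rw [Finset.sum_add_distrib, Finset.sum_neg_distrib, h]
  simp [mul_comm]

lemma isFirstIntegral_Qf_fst_cotLift_Xf : IsFirstIntegral (fun w : E6 => Qf w.1) (cotLift Xf) := by
  intro w
  refine ⟨_, (((hasFDerivAt_fst_apply 0 w).pow 2).add ((hasFDerivAt_fst_apply 1 w).pow 2)).sub
    ((hasFDerivAt_fst_apply 2 w).pow 2), ?_⟩
  simp only [_root_.sub_apply, _root_.add_apply, _root_.smul_apply, ContinuousLinearMap.comp_apply,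
    ContinuousLinearMap.coe_fst', ContinuousLinearMap.proj_apply, cotLift_Xf, cons_val_zero,
    cons_val_one, cons_val]
  ring

lemma isFirstIntegral_Qf_snd_cotLift_Xf : IsFirstIntegral (fun w : E6 => Qf w.2) (cotLift Xf) := by
  intro w
  refine ⟨_, (((hasFDerivAt_snd_apply 0 w).pow 2).add ((hasFDerivAt_snd_apply 1 w).pow 2)).sub
    ((hasFDerivAt_snd_apply 2 w).pow 2), ?_⟩
  simp only [_root_.sub_apply, _root_.add_apply, _root_.smul_apply, ContinuousLinearMap.comp_apply,
    ContinuousLinearMap.coe_snd', ContinuousLinearMap.proj_apply, cotLift_Xf, cons_val_zero,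
    cons_val_one, cons_val]
  ring

/-- `![p 0, p 1, -p 2]` is the vector dual to the covector `p` under `Qf`; null vectors of a
Lorentzian form that are orthogonal to each other are parallel. -/
lemma cross_eq_zero_of_Qf_eq_zero {q p : Fin 3 → ℝ} (hq : Qf q = 0) (hp : Qf p = 0)
    (hqp : q ⬝ᵥ p = 0) : q ⨯₃ ![p 0, p 1, -p 2] = 0 := by
  simp only [Qf, dotProduct, Fin.sum_univ_three] at hq hp hqp
  have h₂ : (q 0 * p 1 - q 1 * p 0) ^ 2 = 0 := by
    linear_combination (q 0 ^ 2 + q 1 ^ 2) * hp + p 2 ^ 2 * hq +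
      (2 * p 2 * q 2 - (p 0 * q 0 + p 1 * q 1 + p 2 * q 2)) * hqp
  -- Lorentzian Lagrange identity: `w₀² + w₁² - w₂² = (q ⬝ᵥ p)² - Qf q * Qf p` for the cross
  -- product `w`.
  have h₀₁ : (q 1 * p 2 + q 2 * p 1) ^ 2 + (q 2 * p 0 + q 0 * p 2) ^ 2 = 0 := by
    linear_combination (q 0 * p 0 + q 1 * p 1 + q 2 * p 2) * hqp -
      (p 0 ^ 2 + p 1 ^ 2 - p 2 ^ 2) * hq + h₂
  obtain ⟨h₀, h₁⟩ := (add_eq_zero_iff_of_nonneg (sq_nonneg _) (sq_nonneg _)).1 h₀₁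
  rw [cross_apply, show (0 : Fin 3 → ℝ) = ![0, 0, 0] by ext i; fin_cases i <;> rfl]
  simp only [cons_val, cons_val_one, cons_val_zero]
  exact vec3_eq (by linear_combination -(pow_eq_zero_iff two_ne_zero).1 h₀)
    (by linear_combination (pow_eq_zero_iff two_ne_zero).1 h₁)
    (by linear_combination (pow_eq_zero_iff two_ne_zero).1 h₂)

lemma not_linearIndependent_cotLift_of_Qf_eq_zero (w : E6) (h₁ : Qf w.1 = 0)
    (h₂ : Qf w.2 = 0) (h₃ : w.1 ⬝ᵥ w.2 = 0) :
    ¬ LinearIndependent ℝ ![cotLift Xf w, cotLift Yf w, cotLift Zf w] := by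
  obtain ⟨q, p⟩ := w
  have hcross := cross_eq_zero_of_Qf_eq_zero h₁ h₂ h₃
  have hc₀ := congrFun hcross 0
  have hc₁ := congrFun hcross 1
  have hc₂ := congrFun hcross 2
  simp only [cross_apply, cons_val, cons_val_one, cons_val_zero, mul_neg, sub_neg_eq_add,
    Pi.zero_apply] at hc₀ hc₁ hc₂
  rw [Fintype.not_linearIndependent_iff]
  simp only [Fin.sum_univ_three, cotLift_Xf, cotLift_Yf, cotLift_Zf]
  by_cases hq : q = 0
  · subst hq
    by_cases hp : p = 0
    · subst hp
      exact ⟨![1, 0, 0], by ext i <;> fin_cases i <;> simp, 0, by simp⟩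
    · obtain ⟨i, hi⟩ := Function.ne_iff.1 hp
      refine ⟨![p 0, -p 1, p 2], ?_, i, ?_⟩
      · ext j <;> fin_cases j <;> simp <;> ring
      · fin_cases i <;> simpa using hi
  · -- `q₀ X - q₁ Y - q₂ Z` vanishes at `q`, and its lift kills `p`, which is dual to a multiple
    -- of `q`.
    obtain ⟨i, hi⟩ := Function.ne_iff.1 hq
    refine ⟨![q 0, -q 1, -q 2], ?_, i, ?_⟩
    · ext j <;> fin_cases j <;> simp <;> linarith
    · fin_cases i <;> simpa using hi

lemma Afun_ray (a : ℝ → ℝ) {t : ℝ} (ht : t ≠ 0) : Afun a ![t, 0, 0] = a (t ^ 2) / t ^ 2 := by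
  simp [Afun, Qf, ht]

lemma Xt_ray (a : ℝ → ℝ) {t : ℝ} (ht : t ≠ 0) : Xt a ![t, 0, 0] = a (t ^ 2) • ![1, 0, 0] := by
  ext i
  fin_cases i
  · simp [Xt, Xf, ff, Rf, Afun_ray a ht]
    field_simp
  all_goals simp [Xt, Xf, ff, Rf]

lemma cotLift_Xt_ray (a : ℝ → ℝ) {t : ℝ} (ht : t ≠ 0) :
    cotLift (Xt a) (![t, 0, 0], 0) = a (t ^ 2) • (![1, 0, 0], 0) := by
  rw [cotLift_mk_zero, Xt_ray a ht, Prod.smul_mk, smul_zero]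

lemma Yt_ray (a : ℝ → ℝ) (t : ℝ) : Yt a ![t, 0, 0] = ![0, 0, t] := by
  ext i
  fin_cases i <;> simp [Yt, Yf, gf, Rf]

lemma Zt_ray (t : ℝ) : Zt ![t, 0, 0] = ![0, t, 0] := by
  ext i
  fin_cases i <;> simp [Zt, Zf]

lemma linearIndependent_cotLift_ray {a : ℝ → ℝ} {t : ℝ} (ha : a (t ^ 2) ≠ 0) (ht : t ≠ 0) :
    LinearIndependent ℝ ![cotLift (Xt a) (![t, 0, 0], 0), cotLift (Yt a) (![t, 0, 0], 0),
      cotLift Zt (![t, 0, 0], 0)] := by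
  rw [Fintype.linearIndependent_iff]
  intro g hg
  simp only [Fin.sum_univ_three, cotLift_mk_zero, Xt_ray a ht, Yt_ray, Zt_ray] at hg
  have hfst := congrArg Prod.fst hg
  intro i
  fin_cases i
  · simpa [ha] using congrFun hfst 0
  · simpa [ht] using congrFun hfst 2
  · simpa [ht] using congrFun hfst 1

theorem lifted_cairnsGhys_not_linearizable_general
    (a : ℝ → ℝ) (hapos : ∀ s : ℝ, 0 < s → 0 < a s) :
    ¬ ∃ (U : Set E6) (φ : E6 → E6),
        IsOpen U ∧ (0 : E6) ∈ U ∧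
        ContDiffOn ℝ (⊤ : ℕ∞) φ U ∧ φ 0 = 0 ∧
        (∀ w ∈ U, Function.Bijective (fderiv ℝ φ w)) ∧
        (∀ w ∈ U,
          fderiv ℝ φ w (cotLift (Xt a) w) = cotLift Xf (φ w) ∧
          fderiv ℝ φ w (cotLift (Yt a) w) = cotLift Yf (φ w) ∧
          fderiv ℝ φ w (cotLift Zt w) = cotLift Zf (φ w)) := by
  rintro ⟨U, φ, hU, h0U, hφ, hφ0, hbij, hconj⟩
  set e : E6 := (![1, 0, 0], 0)
  have hray (t : ℝ) : t • e = (![t, 0, 0], 0) := by ext i <;> fin_cases i <;> simp [e]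
  obtain ⟨T, hT, hTU⟩ := exists_pos_mapsTo_Icc_smul (hU.mem_nhds h0U) e
  have hTe : T • e ∈ U := hTU ⟨hT.le, le_rfl⟩
  have hvanish (I : E6 → ℝ) (hI : IsFirstIntegral I (cotLift Xf)) (hI0 : I 0 = 0) :
      I (φ (T • e)) = 0 := by
    have hconst := hI.comp_eq_of_tangent hU (hφ.differentiableOn (by simp))
      (fun x hx => (hconj x hx).1) hT hTU (by fun_prop) fun t ht => ⟨(a (t ^ 2))⁻¹, ?_⟩
    · simpa [hφ0, hI0] using hconst
    · rw [hray, cotLift_Xt_ray a ht.1.ne', inv_smul_smul₀ (hapos _ (pow_pos ht.1 2)).ne']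
      simpa using (hasDerivAt_id t).smul_const e
  have hind := (linearIndependent_cotLift_ray (hapos _ (pow_pos hT 2)).ne' hT.ne').map'
    (fderiv ℝ φ (T • e)).toLinearMap (LinearMap.ker_eq_bot.2 (hbij _ hTe).1)
  have himage : (fderiv ℝ φ (T • e)).toLinearMap ∘ ![cotLift (Xt a) (![T, 0, 0], 0),
      cotLift (Yt a) (![T, 0, 0], 0), cotLift Zt (![T, 0, 0], 0)] =
      ![cotLift Xf (φ (T • e)), cotLift Yf (φ (T • e)), cotLift Zf (φ (T • e))] := by
    ext i : 1
    fin_cases i <;> simp [← hray, hconj _ hTe]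
  rw [himage] at hind
  exact not_linearIndependent_cotLift_of_Qf_eq_zero (φ (T • e))
    (hvanish _ isFirstIntegral_Qf_fst_cotLift_Xf (by simp [Qf]))
    (hvanish _ isFirstIntegral_Qf_snd_cotLift_Xf (by simp [Qf]))
    (hvanish _ (Xf_eq_mulVec ▸ isFirstIntegral_dotProduct_cotLift_mulVec _) (by simp)) hind

/-- **The Hamiltonian counterexample.** For `a` smooth, vanishing on `(−∞,0]`, positive
on `(0,∞)` and bounded, the cotangent lifts of the Cairns–Ghys perturbed fields
`X̃, Ỹ, Z̃` form a Hamiltonian `𝔰𝔩(2,ℝ)`-action on `ℝ⁶` that is not smoothly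
linearizable at the origin: no local `C^∞` diffeomorphism of a neighbourhood of
`0 ∈ ℝ⁶`, fixing `0`, conjugates them to the cotangent lifts of the linear fields
`X, Y, Z`. -/
theorem lifted_cairnsGhys_not_linearizable
    (a : ℝ → ℝ) (ha : ContDiff ℝ (⊤ : ℕ∞) a)
    (ha0 : ∀ s : ℝ, s ≤ 0 → a s = 0) (hapos : ∀ s : ℝ, 0 < s → 0 < a s)
    (K : ℝ) (haK : ∀ s : ℝ, |a s| ≤ K) :
    ¬ ∃ (U : Set E6) (φ : E6 → E6),
        IsOpen U ∧ (0 : E6) ∈ U ∧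
        ContDiffOn ℝ (⊤ : ℕ∞) φ U ∧ φ 0 = 0 ∧
        (∀ w ∈ U, Function.Bijective (fderiv ℝ φ w)) ∧
        (∀ w ∈ U,
          fderiv ℝ φ w (cotLift (Xt a) w) = cotLift Xf (φ w) ∧
          fderiv ℝ φ w (cotLift (Yt a) w) = cotLift Yf (φ w) ∧
          fderiv ℝ φ w (cotLift Zt w) = cotLift Zf (φ w)) :=
  lifted_cairnsGhys_not_linearizable_general a hapos
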